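/- arXiv:0909.3907 — 2 statements merged into one kernel-verified Lean document; each statement's English description precedes it below -/
import Mathlib

section
/- Let X ∈ L(H_n ⊗ H_m) be a normal operator with eigenvalues {λ_i} and corresponding orthonormal eigenvectors {|v_i⟩}. Then ‖X‖_{S(k)} ≤ Σ_i |λ_i| · ‖|v_i⟩‖_{s(k)}². -/
noncomputable section
open scoped BigOperators

/-- Inner product (conjugate-linear in the first argument). -/
def ip {ι : Type*} [Fintype ι] (w v : ι → ℂ) : ℂ := ∑ p, star (w p) * v p

/-- Euclidean norm. -/
def nrm {ι : Type*} [Fintype ι] (v : ι → ℂ) : ℝ := Real.sqrt (ip v v).re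

/-- Elementary tensor (product vector). -/
def prodVec {n m : ℕ} (a : Fin n → ℂ) (b : Fin m → ℂ) : Fin n × Fin m → ℂ :=
  fun p => a p.1 * b p.2

/-- Schmidt rank at most `k`: `v` is a sum of `k` product vectors. -/
def SRle {n m : ℕ} (k : ℕ) (v : Fin n × Fin m → ℂ) : Prop :=
  ∃ (a : Fin k → Fin n → ℂ) (b : Fin k → Fin m → ℂ), v = ∑ i, prodVec (a i) (b i)

/-- The `k`-th vector norm. -/
def vecNorm {n m : ℕ} (k : ℕ) (v : Fin n × Fin m → ℂ) : ℝ :=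
  sSup {r | ∃ w, nrm w = 1 ∧ SRle k w ∧ r = ‖ip w v‖}

/-- The `k`-th operator norm. -/
def opNorm {n m : ℕ} (k : ℕ) (X : Matrix (Fin n × Fin m) (Fin n × Fin m) ℂ) : ℝ :=
  sSup {r | ∃ v w, nrm v = 1 ∧ nrm w = 1 ∧ SRle k v ∧ SRle k w ∧
    r = ‖ip w (X.mulVec v)‖}

/-- Rank-one operator `|w⟩⟨v|`. -/
def outer {ι : Type*} (w v : ι → ℂ) : Matrix ι ι ℂ := Matrix.of fun p q => w p * star (v q)

/-- `k`-block positivity. -/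
def BlockPos {n m : ℕ} (k : ℕ) (Y : Matrix (Fin n × Fin m) (Fin n × Fin m) ℂ) : Prop :=
  ∀ v : Fin n × Fin m → ℂ, nrm v = 1 → SRle k v → 0 ≤ (ip v (Y.mulVec v)).re

/-- Schmidt number at most `k`. -/
def SNle {n m : ℕ} (k : ℕ) (ρ : Matrix (Fin n × Fin m) (Fin n × Fin m) ℂ) : Prop :=
  ∃ (N : ℕ) (p : Fin N → ℝ) (v : Fin N → Fin n × Fin m → ℂ),
    (∀ i, 0 ≤ p i) ∧ (∑ i, p i) = 1 ∧ (∀ i, nrm (v i) = 1) ∧ (∀ i, SRle k (v i)) ∧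
    ρ = ∑ i, (p i : ℂ) • outer (v i) (v i)

/-! Expanding `u` in the orthonormal eigenbasis gives `⟨w|X|u⟩ = ∑ᵢ λᵢ ⟨vᵢ|u⟩⟨w|vᵢ⟩`. When `u` and `w`
are unit vectors of Schmidt rank at most `k`, both `|⟨vᵢ|u⟩| = |⟨u|vᵢ⟩|` and `|⟨w|vᵢ⟩|` are at most
`‖vᵢ‖_{s(k)}`, and the triangle inequality finishes the proof. -/

lemma ip_eq_inner {ι : Type*} [Fintype ι] (w v : ι → ℂ) :
    ip w v = inner ℂ (WithLp.toLp 2 w) (WithLp.toLp 2 v) := by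
  simp [ip, PiLp.inner_apply, mul_comm]

lemma nrm_eq_norm {ι : Type*} [Fintype ι] (v : ι → ℂ) : nrm v = ‖WithLp.toLp 2 v‖ := by
  rw [nrm, ip_eq_inner, norm_eq_sqrt_re_inner (𝕜 := ℂ)]
  rfl

lemma norm_ip_le_nrm_mul_nrm {ι : Type*} [Fintype ι] (w v : ι → ℂ) :
    ‖ip w v‖ ≤ nrm w * nrm v := by
  rw [ip_eq_inner, nrm_eq_norm, nrm_eq_norm]
  exact norm_inner_le_norm _ _

lemma star_ip {ι : Type*} [Fintype ι] (w v : ι → ℂ) : star (ip w v) = ip v w := by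
  simp [ip, mul_comm]

lemma ip_sum {ι κ : Type*} [Fintype ι] (w : ι → ℂ) (s : Finset κ) (v : κ → ι → ℂ) :
    ip w (∑ i ∈ s, v i) = ∑ i ∈ s, ip w (v i) := by
  simp only [ip, Finset.sum_apply, Finset.mul_sum]
  exact Finset.sum_comm

lemma ip_smul_right {ι : Type*} [Fintype ι] (w : ι → ℂ) (c : ℂ) (v : ι → ℂ) :
    ip w (c • v) = c * ip w v := by
  simp only [ip, Pi.smul_apply, smul_eq_mul, Finset.mul_sum]
  exact Finset.sum_congr rfl fun _ _ => by ring

lemma sum_ip_smul_eq_self {ι : Type*} [Fintype ι] [DecidableEq ι] (v : ι → ι → ℂ)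
    (horth : ∀ i j, ip (v i) (v j) = if i = j then 1 else 0) (u : ι → ℂ) :
    ∑ i, ip (v i) u • v i = u := by
  have hon : Orthonormal ℂ fun i => WithLp.toLp 2 (v i) :=
    orthonormal_iff_ite.2 fun i j => by rw [← ip_eq_inner, horth]
  have hsp := hon.linearIndependent.span_eq_top_of_card_eq_finrank'
    (finrank_euclideanSpace (𝕜 := ℂ)).symm
  have := (OrthonormalBasis.mk hon hsp.ge).sum_repr' (WithLp.toLp 2 u)
  simp only [OrthonormalBasis.coe_mk, ← ip_eq_inner] at this
  apply WithLp.toLp_injective 2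
  simpa using this

lemma ip_mulVec_eq_sum_of_eigenvectors {ι : Type*} [Fintype ι] [DecidableEq ι]
    (X : Matrix ι ι ℂ) (μ : ι → ℂ) (v : ι → ι → ℂ)
    (horth : ∀ i j, ip (v i) (v j) = if i = j then 1 else 0)
    (heig : ∀ i, X.mulVec (v i) = μ i • v i) (u w : ι → ℂ) :
    ip w (X.mulVec u) = ∑ i, μ i * (ip (v i) u * ip w (v i)) := by
  conv_lhs => rw [← sum_ip_smul_eq_self v horth u]
  simp only [Matrix.mulVec_sum, Matrix.mulVec_smul, heig, ip_sum, ip_smul_right]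
  exact Finset.sum_congr rfl fun _ _ => by ring

lemma norm_ip_le_vecNorm {n m k : ℕ} {w : Fin n × Fin m → ℂ} (hw : nrm w = 1) (hwk : SRle k w)
    (x : Fin n × Fin m → ℂ) : ‖ip w x‖ ≤ vecNorm k x :=
  le_csSup ⟨nrm x, by rintro _ ⟨u, hu, -, rfl⟩; simpa [hu] using norm_ip_le_nrm_mul_nrm u x⟩
    ⟨w, hw, hwk, rfl⟩

theorem stmt8_general {n m k : ℕ}
    (X : Matrix (Fin n × Fin m) (Fin n × Fin m) ℂ)
    (μ : Fin n × Fin m → ℂ) (v : Fin n × Fin m → Fin n × Fin m → ℂ)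
    (horth : ∀ i j, ip (v i) (v j) = if i = j then 1 else 0)
    (heig : ∀ i, X.mulVec (v i) = μ i • v i) :
    opNorm k X ≤ ∑ i, ‖μ i‖ * vecNorm k (v i) ^ 2 := by
  refine Real.sSup_le ?_ (by positivity)
  rintro _ ⟨u, w, hu, hw, huk, hwk, rfl⟩
  rw [ip_mulVec_eq_sum_of_eigenvectors X μ v horth heig]
  refine norm_sum_le_of_le _ fun i _ => ?_
  rw [norm_mul, norm_mul, sq, ← star_ip, norm_star]
  gcongr
  · exact (norm_nonneg _).trans (norm_ip_le_vecNorm hu huk _)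
  · exact norm_ip_le_vecNorm hu huk _
  · exact norm_ip_le_vecNorm hw hwk _

/-- for a normal operator with eigenvalues `μ_i` and orthonormal
eigenvectors `v_i`, `‖X‖_{S(k)} ≤ Σ_i |μ_i| ‖v_i‖_{s(k)}²`. -/
theorem stmt8 {n m k : ℕ} (hmn : m ≤ n) (hk1 : 1 ≤ k) (hkm : k ≤ m)
    (X : Matrix (Fin n × Fin m) (Fin n × Fin m) ℂ)
    (μ : Fin n × Fin m → ℂ) (v : Fin n × Fin m → Fin n × Fin m → ℂ)
    (horth : ∀ i j, ip (v i) (v j) = if i = j then 1 else 0)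
    (heig : ∀ i, X.mulVec (v i) = μ i • v i) :
    opNorm k X ≤ ∑ i, ‖μ i‖ * vecNorm k (v i) ^ 2 :=
  stmt8_general X μ v horth heig
end
end

section
/- If X = X* ∈ L(H_n ⊗ H_m) is k-block positive, then X has at most (n−k)(m−k) negative eigenvalues (counted with multiplicity). -/
noncomputable section
open scoped BigOperators

/-!
The eigenvectors with negative eigenvalues span a subspace `S` of dimension `> (n-k)(m-k)`;
any unit vector of `S` has negative expectation in `X`, so it suffices that `S` contains a unit
vector of Schmidt rank `≤ k`.

For that, maximise `‖P w‖²` (`P` the projection onto `S`) over the compact set of unit vectors of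
Schmidt rank `≤ k`. If the maximum `μ` is `< 1`, the Hermitian form of `P - μ` is `≤ 0` on all
vectors of Schmidt rank `≤ k` and vanishes at the maximiser `w₀ = ∑ⱼ aⱼ ⊗ eⱼ`, where Gram–Schmidt
makes each `eⱼ` a unit vector or zero, and the nonzero ones orthogonal. If the `aⱼ` are dependent,
`w₀` has Schmidt rank `< k`, so `w₀ + s (a ⊗ b)` is admissible for every product vector, and
first-order optimality gives `P w₀ = μ w₀`, impossible for `0 < μ < 1`. Otherwise the curves
`∑ⱼ (aⱼ + s cⱼ) ⊗ (eⱼ + s dⱼ)` are admissible, and second-order optimality makes the form `≤ 0` on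
their tangent vectors `∑ⱼ cⱼ ⊗ eⱼ + aⱼ ⊗ dⱼ`. These form a space of dimension `≥ k(n+m) - k²`, so
it meets `S` in some `T ≠ 0`, where the form equals `(1 - μ)‖T‖² > 0`. Choosing `s` real or
imaginary makes the mixed second-order term nonnegative; this is where the complex field is used.
-/

open Matrix

section InnerProduct

variable {ι : Type*} [Fintype ι]

lemma ip_eq_dotProduct (w v : ι → ℂ) : ip w v = star w ⬝ᵥ v := rfl

lemma ip_add_left (x y z : ι → ℂ) : ip (x + y) z = ip x z + ip y z := by
  simp [ip_eq_dotProduct, add_dotProduct]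

lemma ip_add_right (x y z : ι → ℂ) : ip x (y + z) = ip x y + ip x z := by
  simp [ip_eq_dotProduct, dotProduct_add]

lemma ip_sub_left (x y z : ι → ℂ) : ip (x - y) z = ip x z - ip y z := by
  simp [ip_eq_dotProduct, sub_dotProduct]

lemma ip_sub_right (x y z : ι → ℂ) : ip x (y - z) = ip x y - ip x z := by
  simp [ip_eq_dotProduct, dotProduct_sub]

lemma ip_smul_left (s : ℂ) (x y : ι → ℂ) : ip (s • x) y = star s * ip x y := by
  simp [ip_eq_dotProduct, star_smul, smul_dotProduct]

lemma ip_smul_right_s17 (s : ℂ) (x y : ι → ℂ) : ip x (s • y) = s * ip x y := by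
  simp [ip_eq_dotProduct, dotProduct_smul]

lemma ip_zero_left (y : ι → ℂ) : ip 0 y = 0 := by simp [ip]

lemma ip_zero_right (y : ι → ℂ) : ip y 0 = 0 := by simp [ip]

lemma ip_sum_left {κ : Type*} (s : Finset κ) (f : κ → ι → ℂ) (y : ι → ℂ) :
    ip (∑ i ∈ s, f i) y = ∑ i ∈ s, ip (f i) y := by
  simp [ip_eq_dotProduct, star_sum, sum_dotProduct]

lemma ip_sum_right {κ : Type*} (s : Finset κ) (y : ι → ℂ) (f : κ → ι → ℂ) :
    ip y (∑ i ∈ s, f i) = ∑ i ∈ s, ip y (f i) := by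
  simp [ip_eq_dotProduct, dotProduct_sum]

lemma star_ip_s17 (x y : ι → ℂ) : star (ip x y) = ip y x := by
  simp [ip, star_sum, mul_comm]

lemma ip_single_right [DecidableEq ι] (x : ι → ℂ) (p : ι) : ip x (Pi.single p 1) = star (x p) := by
  simp [ip_eq_dotProduct, dotProduct_single]

lemma ip_mulVec_of_isHermitian {M : Matrix ι ι ℂ} (hM : M.IsHermitian) (x y : ι → ℂ) :
    ip x (M *ᵥ y) = ip (M *ᵥ x) y := by
  rw [ip_eq_dotProduct, ip_eq_dotProduct, Matrix.star_mulVec, hM.eq, Matrix.dotProduct_mulVec]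

lemma re_ip_self (x : ι → ℂ) : (ip x x).re = ∑ p, Complex.normSq (x p) := by
  simp [ip, Complex.re_sum, Complex.normSq_apply, mul_comm]

lemma re_ip_self_nonneg (x : ι → ℂ) : 0 ≤ (ip x x).re := by
  rw [re_ip_self]; exact Finset.sum_nonneg fun p _ => Complex.normSq_nonneg (x p)

lemma re_ip_self_pos {x : ι → ℂ} (hx : x ≠ 0) : 0 < (ip x x).re := by
  obtain ⟨p, hp⟩ := Function.ne_iff.1 hx
  rw [re_ip_self]
  exact Finset.sum_pos' (fun _ _ => Complex.normSq_nonneg _)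
    ⟨p, Finset.mem_univ p, Complex.normSq_pos.2 hp⟩

lemma normSq_apply_le_re_ip_self (x : ι → ℂ) (p : ι) : Complex.normSq (x p) ≤ (ip x x).re := by
  rw [re_ip_self]
  exact Finset.single_le_sum (fun q _ => Complex.normSq_nonneg (x q)) (Finset.mem_univ p)

lemma re_ip_smul_self (s : ℂ) (x : ι → ℂ) :
    (ip (s • x) (s • x)).re = Complex.normSq s * (ip x x).re := by
  rw [ip_smul_left, ip_smul_right_s17, ← mul_assoc, Complex.star_def,
    ← Complex.normSq_eq_conj_mul_self, Complex.re_ofReal_mul]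

lemma nrm_eq_one_iff {x : ι → ℂ} : nrm x = 1 ↔ (ip x x).re = 1 := by
  rw [nrm, Real.sqrt_eq_one]

lemma ne_zero_of_nrm_eq_one {x : ι → ℂ} (h : nrm x = 1) : x ≠ 0 := by
  rintro rfl
  simp [nrm, ip_zero_left] at h

lemma continuous_nrm : Continuous (nrm (ι := ι)) := by
  have h : nrm (ι := ι) = fun x => Real.sqrt (∑ p, Complex.normSq (x p)) := by
    funext x; rw [nrm, re_ip_self]
  rw [h]
  fun_prop

end InnerProduct

lemma exists_pos_add_mul_pos {a : ℝ} (ha : 0 < a) (c : ℝ) : ∃ t : ℝ, 0 < t ∧ 0 < a + t * c := by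
  have hc : 0 < |c| + 1 := by positivity
  refine ⟨a / (|c| + 1), by positivity, ?_⟩
  have hlt : a / (|c| + 1) * |c| < a := by
    rw [div_mul_eq_mul_div, div_lt_iff₀ hc]
    linarith
  nlinarith [neg_abs_le c, div_pos ha hc]

lemma exists_normSq_eq_one_re_sq_mul_nonneg (b : ℂ) :
    ∃ ψ : ℂ, Complex.normSq ψ = 1 ∧ 0 ≤ (ψ ^ 2 * b).re := by
  rcases le_or_gt 0 b.re with hb | hb
  · exact ⟨1, by simp, by simpa using hb⟩
  · exact ⟨Complex.I, by simp, by simp; linarith⟩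

lemma Matrix.IsHermitian.sub_smul_one {ι : Type*} [DecidableEq ι] {M : Matrix ι ι ℂ}
    (hM : M.IsHermitian) (μ : ℝ) :
    (M - (μ : ℂ) • 1).IsHermitian :=
  hM.sub (Matrix.isHermitian_one.smul (by simp [IsSelfAdjoint]))

section HermitianForm

variable {ι : Type*} [Fintype ι]

def hermForm (M : Matrix ι ι ℂ) (x : ι → ℂ) : ℝ := (ip x (M *ᵥ x)).re

variable {M : Matrix ι ι ℂ}

lemma hermForm_smul (s : ℂ) (x : ι → ℂ) : hermForm M (s • x) = Complex.normSq s * hermForm M x := by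
  rw [hermForm, hermForm, Matrix.mulVec_smul, ip_smul_left, ip_smul_right_s17, ← mul_assoc,
    Complex.star_def, ← Complex.normSq_eq_conj_mul_self, Complex.re_ofReal_mul]

lemma hermForm_add_smul (hM : M.IsHermitian) (x y : ι → ℂ) (s : ℂ) :
    hermForm M (x + s • y) =
      hermForm M x + 2 * (s * ip x (M *ᵥ y)).re + Complex.normSq s * hermForm M y := by
  have hyx : ip y (M *ᵥ x) = star (ip x (M *ᵥ y)) := by
    rw [star_ip_s17, ip_mulVec_of_isHermitian hM]
  simp only [hermForm, Matrix.mulVec_add, Matrix.mulVec_smul, ip_add_left, ip_add_right,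
    ip_smul_left, ip_smul_right_s17, hyx]
  simp only [Complex.add_re, Complex.add_im, Complex.mul_re, Complex.mul_im, Complex.star_def,
    Complex.conj_re, Complex.conj_im, Complex.normSq_apply]
  ring

lemma hermForm_sub_smul_one [DecidableEq ι] (μ : ℝ) (x : ι → ℂ) :
    hermForm (M - (μ : ℂ) • 1) x = hermForm M x - μ * (ip x x).re := by
  rw [hermForm, hermForm, Matrix.sub_mulVec, Matrix.smul_mulVec, Matrix.one_mulVec, ip_sub_right,
    ip_smul_right_s17, Complex.sub_re, Complex.re_ofReal_mul]

lemma continuous_hermForm (M : Matrix ι ι ℂ) : Continuous (hermForm M) := by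
  unfold hermForm ip Matrix.mulVec dotProduct
  fun_prop

lemma ip_mulVec_eq_zero_of_hermForm_add_smul_nonpos (hM : M.IsHermitian) {x y : ι → ℂ}
    (hx : hermForm M x = 0) (h : ∀ s : ℂ, hermForm M (x + s • y) ≤ 0) :
    ip x (M *ᵥ y) = 0 := by
  set a := ip x (M *ᵥ y)
  by_contra ha
  have hN : 0 < Complex.normSq a := Complex.normSq_pos.2 ha
  obtain ⟨t, ht, hpos⟩ := exists_pos_add_mul_pos two_pos (hermForm M y)
  have hs := h (t * star a)
  rw [hermForm_add_smul hM, hx, mul_assoc, Complex.star_def, ← Complex.normSq_eq_conj_mul_self,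
    ← Complex.ofReal_mul, Complex.ofReal_re, Complex.normSq_mul, Complex.normSq_ofReal,
    Complex.normSq_conj] at hs
  nlinarith [mul_pos (mul_pos ht hN) hpos]

lemma hermForm_nonpos_of_hermForm_curve_nonpos (hM : M.IsHermitian) {x y z : ι → ℂ}
    (hx : hermForm M x = 0) (h : ∀ s : ℂ, hermForm M (x + s • (y + s • z)) ≤ 0) :
    hermForm M y ≤ 0 := by
  have hexp : ∀ s : ℂ, hermForm M (x + s • (y + s • z)) =
      2 * (s * ip x (M *ᵥ y)).re + 2 * (s ^ 2 * ip x (M *ᵥ z)).re +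
        Complex.normSq s *
          (hermForm M y + 2 * (s * ip y (M *ᵥ z)).re + Complex.normSq s * hermForm M z) := by
    intro s
    rw [hermForm_add_smul hM, hermForm_add_smul hM, hx, Matrix.mulVec_add, Matrix.mulVec_smul,
      ip_add_right, ip_smul_right_s17, mul_add, Complex.add_re, ← mul_assoc, ← sq]
    ring
  by_contra! hy
  obtain ⟨ψ, hψ, hψb⟩ := exists_normSq_eq_one_re_sq_mul_nonneg (ip x (M *ᵥ z))
  obtain ⟨u, hu, hpos⟩ := exists_pos_add_mul_pos hy (hermForm M z)
  set s : ℂ := (Real.sqrt u : ℂ) * ψ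
  have hs : Complex.normSq s = u := by
    rw [Complex.normSq_mul, Complex.normSq_ofReal, hψ, mul_one, Real.mul_self_sqrt hu.le]
  have hs2 : (s ^ 2 * ip x (M *ᵥ z)).re = u * (ψ ^ 2 * ip x (M *ᵥ z)).re := by
    rw [mul_pow, ← Complex.ofReal_pow, Real.sq_sqrt hu.le, mul_assoc, Complex.re_ofReal_mul]
  -- adding the inequalities at `s` and `-s` cancels the odd-order terms
  have h1 := h s
  have h2 := h (-s)
  rw [hexp] at h1 h2
  simp only [neg_mul, Complex.neg_re, neg_sq, Complex.normSq_neg] at h2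
  rw [hs, hs2] at h1 h2
  nlinarith [mul_pos hu hpos, mul_nonneg hu.le hψb]

end HermitianForm

def projMatrix {ι κ : Type*} [Fintype κ] (v : κ → ι → ℂ) : Matrix ι ι ℂ :=
  ∑ i, outer (v i) (v i)

lemma isHermitian_projMatrix {ι κ : Type*} [Fintype κ] (v : κ → ι → ℂ) :
    (projMatrix v).IsHermitian := by
  rw [Matrix.IsHermitian, projMatrix, Matrix.conjTranspose_sum]
  refine Finset.sum_congr rfl fun i _ => Matrix.ext fun p q => ?_
  simp [outer, mul_comm]

section Orthonormal

variable {ι κ : Type*} [Fintype ι] {v : κ → ι → ℂ}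

def IpOrthonormal [DecidableEq κ] (v : κ → ι → ℂ) : Prop :=
  ∀ i j, ip (v i) (v j) = if i = j then 1 else 0

lemma IpOrthonormal.ne_zero [DecidableEq κ] (hv : IpOrthonormal v) (i : κ) : v i ≠ 0 :=
  fun h => by simpa [h, ip_zero_left] using hv i i

variable [Fintype κ]

lemma projMatrix_mulVec (x : ι → ℂ) : projMatrix v *ᵥ x = ∑ i, ip (v i) x • v i := by
  rw [projMatrix, Matrix.sum_mulVec]
  refine Finset.sum_congr rfl fun i _ => funext fun p => ?_
  simp [outer, Matrix.mulVec, dotProduct, ip, Finset.mul_sum, mul_comm, mul_left_comm]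

lemma projMatrix_mulVec_mem_span (x : ι → ℂ) :
    projMatrix v *ᵥ x ∈ Submodule.span ℂ (Set.range v) := by
  rw [projMatrix_mulVec]
  exact Submodule.sum_mem _ fun i _ => Submodule.smul_mem _ _ (Submodule.subset_span ⟨i, rfl⟩)

lemma hermForm_projMatrix (x : ι → ℂ) :
    hermForm (projMatrix v) x = ∑ i, Complex.normSq (ip (v i) x) := by
  simp [hermForm, projMatrix_mulVec, ip_sum_right, ip_smul_right_s17, Complex.re_sum,
    ← star_ip_s17 x, Complex.normSq_apply, mul_comm]

variable [DecidableEq κ]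

lemma IpOrthonormal.ip_sum_smul (hv : IpOrthonormal v) (j : κ) (c : κ → ℂ) :
    ip (v j) (∑ i, c i • v i) = c j := by
  simp [ip_sum_right, ip_smul_right_s17, hv j]

lemma IpOrthonormal.ip_sum_smul_sum_smul (hv : IpOrthonormal v) (c d : κ → ℂ) :
    ip (∑ i, c i • v i) (∑ i, d i • v i) = ∑ i, star (c i) * d i := by
  simp [ip_sum_left, ip_smul_left, hv.ip_sum_smul]

lemma IpOrthonormal.linearIndependent (hv : IpOrthonormal v) : LinearIndependent ℂ v :=
  Fintype.linearIndependent_iff.2 fun g hg i => by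
    rw [← hv.ip_sum_smul i g, hg, ip_zero_right]

lemma IpOrthonormal.projMatrix_mulVec_self (hv : IpOrthonormal v) (j : κ) :
    projMatrix v *ᵥ v j = v j := by
  simp [projMatrix_mulVec, hv _ j]

lemma IpOrthonormal.projMatrix_mulVec_of_mem_span (hv : IpOrthonormal v) {x : ι → ℂ}
    (hx : x ∈ Submodule.span ℂ (Set.range v)) : projMatrix v *ᵥ x = x := by
  have hle : Submodule.span ℂ (Set.range v) ≤ LinearMap.eqLocus (projMatrix v).mulVecLin .id :=
    Submodule.span_le.2 <| Set.range_subset_iff.2 hv.projMatrix_mulVec_self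
  exact hle hx

lemma IpOrthonormal.re_ip_sub_projMatrix_mulVec (hv : IpOrthonormal v) (x : ι → ℂ) :
    (ip (x - projMatrix v *ᵥ x) (x - projMatrix v *ᵥ x)).re =
      (ip x x).re - hermForm (projMatrix v) x := by
  have horth : ip (projMatrix v *ᵥ x) (x - projMatrix v *ᵥ x) = 0 := by
    rw [ip_sub_right, ip_mulVec_of_isHermitian (isHermitian_projMatrix v),
      hv.projMatrix_mulVec_of_mem_span (projMatrix_mulVec_mem_span x), sub_self]
  rw [ip_sub_left, horth, sub_zero, ip_sub_right, Complex.sub_re, hermForm]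

lemma IpOrthonormal.mem_span_of_re_ip_self_le_hermForm (hv : IpOrthonormal v) {x : ι → ℂ}
    (hx : (ip x x).re ≤ hermForm (projMatrix v) x) : x ∈ Submodule.span ℂ (Set.range v) := by
  have hzero : x - projMatrix v *ᵥ x = 0 := by
    by_contra h
    linarith [re_ip_self_pos h, hv.re_ip_sub_projMatrix_mulVec x]
  rw [sub_eq_zero.1 hzero]
  exact projMatrix_mulVec_mem_span x

lemma IpOrthonormal.eq_one_of_projMatrix_mulVec_eq_smul (hv : IpOrthonormal v) {x : ι → ℂ}
    (hx : x ≠ 0) {μ : ℂ} (hμ : μ ≠ 0) (h : projMatrix v *ᵥ x = μ • x) : μ = 1 := by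
  have hmem : x ∈ Submodule.span ℂ (Set.range v) := by
    rw [← inv_smul_smul₀ hμ x, ← h]
    exact Submodule.smul_mem _ _ (projMatrix_mulVec_mem_span x)
  rw [hv.projMatrix_mulVec_of_mem_span hmem] at h
  exact smul_left_injective ℂ hx (h.symm.trans (one_smul ℂ x).symm)

end Orthonormal

section ProductVectors

variable {n m : ℕ}

lemma prodVec_add_left (a b : Fin n → ℂ) (c : Fin m → ℂ) :
    prodVec (a + b) c = prodVec a c + prodVec b c := by
  funext p; simp [prodVec, add_mul]

lemma prodVec_add_right (a : Fin n → ℂ) (b c : Fin m → ℂ) :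
    prodVec a (b + c) = prodVec a b + prodVec a c := by
  funext p; simp [prodVec, mul_add]

lemma prodVec_sub_right (a : Fin n → ℂ) (b c : Fin m → ℂ) :
    prodVec a (b - c) = prodVec a b - prodVec a c := by
  funext p; simp [prodVec, mul_sub]

lemma prodVec_neg_left (a : Fin n → ℂ) (c : Fin m → ℂ) : prodVec (-a) c = -prodVec a c := by
  funext p; simp [prodVec]

lemma prodVec_smul_left (s : ℂ) (a : Fin n → ℂ) (c : Fin m → ℂ) :
    prodVec (s • a) c = s • prodVec a c := by
  funext p; simp [prodVec, mul_assoc]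

lemma prodVec_smul_right (s : ℂ) (a : Fin n → ℂ) (c : Fin m → ℂ) :
    prodVec a (s • c) = s • prodVec a c := by
  funext p; simp [prodVec, mul_left_comm]

lemma prodVec_sum_left {κ : Type*} (s : Finset κ) (f : κ → Fin n → ℂ) (c : Fin m → ℂ) :
    prodVec (∑ i ∈ s, f i) c = ∑ i ∈ s, prodVec (f i) c := by
  funext p; simp [prodVec, Finset.sum_apply, Finset.sum_mul]

lemma prodVec_sum_right {κ : Type*} (s : Finset κ) (a : Fin n → ℂ) (f : κ → Fin m → ℂ) :
    prodVec a (∑ i ∈ s, f i) = ∑ i ∈ s, prodVec a (f i) := by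
  funext p; simp [prodVec, Finset.sum_apply, Finset.mul_sum]

lemma prodVec_single (p : Fin n) (q : Fin m) :
    prodVec (Pi.single p 1) (Pi.single q 1) = Pi.single (p, q) (1 : ℂ) := by
  funext ⟨p', q'⟩
  by_cases hp : p' = p <;> by_cases hq : q' = q <;> simp [prodVec, hp, hq]

lemma ip_prodVec (a c : Fin n → ℂ) (b d : Fin m → ℂ) :
    ip (prodVec a b) (prodVec c d) = ip a c * ip b d := by
  simp only [ip, prodVec, Fintype.sum_prod_type, Finset.sum_mul_sum, star_mul']
  exact Finset.sum_congr rfl fun p _ => Finset.sum_congr rfl fun q _ => by ring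

def contractSnd (f : Fin m → ℂ) : (Fin n × Fin m → ℂ) →ₗ[ℂ] (Fin n → ℂ) where
  toFun w p := ip f fun q => w (p, q)
  map_add' _ _ := funext fun _ => ip_add_right _ _ _
  map_smul' _ _ := funext fun _ => ip_smul_right_s17 _ _ _

lemma contractSnd_prodVec (f : Fin m → ℂ) (a : Fin n → ℂ) (b : Fin m → ℂ) :
    contractSnd f (prodVec a b) = ip f b • a := by
  funext p
  simp [contractSnd, prodVec, ip, Finset.mul_sum, mul_comm, mul_assoc]

lemma SRle_zero (k : ℕ) : SRle k (0 : Fin n × Fin m → ℂ) :=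
  ⟨0, 0, by funext p; simp [prodVec]⟩

lemma SRle_one_prodVec (a : Fin n → ℂ) (b : Fin m → ℂ) : SRle 1 (prodVec a b) :=
  ⟨fun _ => a, fun _ => b, by simp⟩

lemma SRle.smul {k : ℕ} {w : Fin n × Fin m → ℂ} (h : SRle k w) (s : ℂ) : SRle k (s • w) := by
  obtain ⟨a, b, rfl⟩ := h
  exact ⟨fun i => s • a i, b, by simp [Finset.smul_sum, prodVec_smul_left]⟩

lemma SRle.add {k l : ℕ} {x y : Fin n × Fin m → ℂ} (hx : SRle k x) (hy : SRle l y) :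
    SRle (k + l) (x + y) := by
  obtain ⟨a, b, rfl⟩ := hx
  obtain ⟨c, d, rfl⟩ := hy
  exact ⟨Fin.append a c, Fin.append b d, by simp [Fin.sum_univ_add]⟩

lemma SRle.mono {k l : ℕ} {w : Fin n × Fin m → ℂ} (h : SRle k w) (hkl : k ≤ l) : SRle l w := by
  obtain ⟨d, rfl⟩ := Nat.exists_eq_add_of_le hkl
  simpa using h.add (SRle_zero d)

lemma SRle_of_not_linearIndependent {k : ℕ} {A : Fin (k + 1) → Fin n → ℂ}
    (hA : ¬LinearIndependent ℂ A) (E : Fin (k + 1) → Fin m → ℂ) :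
    SRle k (∑ j, prodVec (A j) (E j)) := by
  obtain ⟨g, hg, j₀, hj₀⟩ := Fintype.not_linearIndependent_iff.1 hA
  set r : Fin k → ℂ := fun i => g (j₀.succAbove i) / g j₀
  have hAj₀ : A j₀ = -∑ i, r i • A (j₀.succAbove i) := by
    rw [Fin.sum_univ_succAbove _ j₀] at hg
    simp only [r, div_eq_inv_mul, mul_smul, ← Finset.smul_sum]
    rw [eq_neg_iff_add_eq_zero, ← smul_right_inj hj₀, smul_add, smul_inv_smul₀ hj₀, hg, smul_zero]
  refine ⟨fun i => A (j₀.succAbove i), fun i => E (j₀.succAbove i) - r i • E j₀, ?_⟩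
  simp only [prodVec_sub_right, prodVec_smul_right, Finset.sum_sub_distrib]
  rw [Fin.sum_univ_succAbove _ j₀, hAj₀, prodVec_neg_left, prodVec_sum_left]
  simp only [prodVec_smul_left]
  abel

end ProductVectors

section OrthogonalRepresentation

open InnerProductSpace

lemma inner_eq_ip {ι : Type*} [Fintype ι] (x y : EuclideanSpace ℂ ι) :
    inner ℂ x y = ip (WithLp.ofLp x) (WithLp.ofLp y) := by
  simp [PiLp.inner_apply, ip, mul_comm]

lemma sum_inner_smul_eq_self {E : Type*} [NormedAddCommGroup E] [InnerProductSpace ℂ E]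
    {κ : Type*} [Fintype κ] {e : κ → E} (horth : Pairwise fun i j => inner ℂ (e i) (e j) = 0)
    (hnorm : ∀ i, e i = 0 ∨ ‖e i‖ = 1) {x : E} (hx : x ∈ Submodule.span ℂ (Set.range e)) :
    ∑ i, inner ℂ (e i) x • e i = x := by
  induction hx using Submodule.span_induction with
  | mem x hx =>
    obtain ⟨l, rfl⟩ := hx
    rw [Finset.sum_eq_single l (fun i _ hi => by rw [horth hi, zero_smul]) (by simp)]
    rcases hnorm l with h | h
    · simp [h]
    · simp [inner_self_eq_norm_sq_to_K, h]
  | zero => simp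
  | add x y _ _ hx hy => simp only [inner_add_right, add_smul, Finset.sum_add_distrib, hx, hy]
  | smul s x _ hx => simp only [inner_smul_right, mul_smul, ← Finset.smul_sum, hx]

lemma exists_pairwise_ip_eq_zero_eq_sum {ι : Type*} [Fintype ι] {k : ℕ} (b : Fin k → ι → ℂ) :
    ∃ E : Fin k → ι → ℂ, (Pairwise fun i j => ip (E i) (E j) = 0) ∧
      (∀ i, E i = 0 ∨ ip (E i) (E i) = 1) ∧ ∀ j, b j = ∑ i, ip (E i) (b j) • E i := by
  set e := gramSchmidtNormed ℂ fun j => (WithLp.toLp 2 (b j) : EuclideanSpace ℂ ι)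
  have horth : Pairwise fun i j => inner ℂ (e i) (e j) = 0 := fun i j hij => by
    simp [e, gramSchmidtNormed, gramSchmidt_orthogonal ℂ _ hij]
  have hnorm : ∀ i, e i = 0 ∨ ‖e i‖ = 1 :=
    fun i => or_iff_not_imp_left.2 gramSchmidtNormed_unit_length'
  refine ⟨fun i => WithLp.ofLp (e i), fun i j hij => (inner_eq_ip _ _).symm.trans (horth hij),
    fun i => (hnorm i).imp (by simp +contextual) fun h => ?_, fun j => ?_⟩
  · rw [← inner_eq_ip, inner_self_eq_norm_sq_to_K, h]; simp
  · have hmem : WithLp.toLp 2 (b j) ∈ Submodule.span ℂ (Set.range e) := by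
      rw [span_gramSchmidtNormed_range, span_gramSchmidt]
      exact Submodule.subset_span ⟨j, rfl⟩
    simpa [WithLp.ofLp_sum, inner_eq_ip] using
      (congrArg WithLp.ofLp (sum_inner_smul_eq_self horth hnorm hmem)).symm

variable {n m k : ℕ}

lemma SRle.exists_orthogonal_repr {w : Fin n × Fin m → ℂ} (h : SRle k w) :
    ∃ (A : Fin k → Fin n → ℂ) (E : Fin k → Fin m → ℂ), w = ∑ j, prodVec (A j) (E j) ∧
      (Pairwise fun i j => ip (E i) (E j) = 0) ∧
      ∀ j, ip (E j) (E j) = 1 ∨ (E j = 0 ∧ A j = 0) := by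
  obtain ⟨a, b, rfl⟩ := h
  obtain ⟨E, horth, hnorm, hb⟩ := exists_pairwise_ip_eq_zero_eq_sum b
  refine ⟨fun i => ∑ j, ip (E i) (b j) • a j, E, ?_, horth,
    fun i => (hnorm i).symm.imp_right fun h => ⟨h, by simp [h, ip_zero_left]⟩⟩
  calc ∑ j, prodVec (a j) (b j) = ∑ j, ∑ i, ip (E i) (b j) • prodVec (a j) (E i) := by
        refine Finset.sum_congr rfl fun j _ => ?_
        conv_lhs => rw [hb j]
        simp [prodVec_sum_right, prodVec_smul_right]
    _ = ∑ i, prodVec (∑ j, ip (E i) (b j) • a j) (E i) := by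
        rw [Finset.sum_comm]
        simp [prodVec_sum_left, prodVec_smul_left]

lemma SRle.pred_or_exists_linearIndependent {w : Fin n × Fin m → ℂ} (h : SRle (k + 1) w) :
    SRle k w ∨ ∃ (A : Fin (k + 1) → Fin n → ℂ) (E : Fin (k + 1) → Fin m → ℂ),
      w = ∑ j, prodVec (A j) (E j) ∧ LinearIndependent ℂ A ∧ IpOrthonormal E := by
  obtain ⟨A, E, rfl, horth, hAE⟩ := h.exists_orthogonal_repr
  by_cases hA : LinearIndependent ℂ A
  · refine .inr ⟨A, E, rfl, hA, fun i j => ?_⟩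
    split_ifs with hij
    · exact hij ▸ (hAE i).resolve_right fun h => hA.ne_zero i h.2
    · exact horth hij
  · exact .inl (SRle_of_not_linearIndependent hA E)

lemma ip_sum_prodVec_of_pairwise (A : Fin k → Fin n → ℂ) (E : Fin k → Fin m → ℂ)
    (horth : Pairwise fun i j => ip (E i) (E j) = 0) :
    ip (∑ j, prodVec (A j) (E j)) (∑ j, prodVec (A j) (E j)) =
      ∑ j, ip (A j) (A j) * ip (E j) (E j) := by
  simp only [ip_sum_left, ip_sum_right, ip_prodVec]
  refine Finset.sum_congr rfl fun i _ => Finset.sum_eq_single i (fun j _ hji => ?_) (by simp)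
  rw [horth hji, mul_zero]

lemma norm_le_one_of_re_ip_self_le_one {ι : Type*} [Fintype ι] {x : ι → ℂ}
    (h : (ip x x).re ≤ 1) (p : ι) : ‖x p‖ ≤ 1 := by
  rw [← sq_le_one_iff₀ (norm_nonneg _), ← Complex.normSq_eq_norm_sq]
  exact (normSq_apply_le_re_ip_self x p).trans h

lemma isCompact_setOf_nrm_eq_one_SRle (n m k : ℕ) :
    IsCompact {w : Fin n × Fin m → ℂ | nrm w = 1 ∧ SRle k w} := by
  set φ : (Fin k → Fin n → ℂ) × (Fin k → Fin m → ℂ) → Fin n × Fin m → ℂ :=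
    fun ab => ∑ j, prodVec (ab.1 j) (ab.2 j)
  have hφ : Continuous φ := continuous_pi fun p => by
    simp only [φ, Finset.sum_apply, prodVec]
    fun_prop
  have hset : {w | nrm w = 1 ∧ SRle k w} = φ '' Metric.closedBall 0 1 ∩ {w | nrm w = 1} := by
    ext w
    refine ⟨fun ⟨hw, hwS⟩ => ⟨?_, hw⟩, fun ⟨⟨ab, _, hab⟩, hw⟩ => ⟨hw, ab.1, ab.2, hab.symm⟩⟩
    obtain ⟨A, E, rfl, horth, hAE⟩ := hwS.exists_orthogonal_repr
    have hsum : ∑ j, (ip (A j) (A j)).re = 1 := by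
      rw [← nrm_eq_one_iff.1 hw, ip_sum_prodVec_of_pairwise A E horth, Complex.re_sum]
      refine Finset.sum_congr rfl fun j _ => ?_
      rcases hAE j with h | ⟨-, h⟩ <;> simp [h, ip_zero_left]
    have hA : ∀ j, (ip (A j) (A j)).re ≤ 1 := fun j =>
      hsum ▸ Finset.single_le_sum (fun i _ => re_ip_self_nonneg (A i)) (Finset.mem_univ j)
    have hE : ∀ j, (ip (E j) (E j)).re ≤ 1 := fun j => by
      rcases hAE j with h | ⟨h, -⟩ <;> simp [h, ip_zero_left]
    refine ⟨(A, E), ?_, rfl⟩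
    rw [mem_closedBall_zero_iff, Prod.norm_def, max_le_iff]
    exact ⟨pi_norm_le_iff_of_nonneg zero_le_one |>.2 fun j => pi_norm_le_iff_of_nonneg zero_le_one
        |>.2 (norm_le_one_of_re_ip_self_le_one (hA j)),
      pi_norm_le_iff_of_nonneg zero_le_one |>.2 fun j => pi_norm_le_iff_of_nonneg zero_le_one
        |>.2 (norm_le_one_of_re_ip_self_le_one (hE j))⟩
  rw [hset]
  exact ((isCompact_closedBall _ _).image hφ).inter_right
    (isClosed_eq continuous_nrm continuous_const)

end OrthogonalRepresentation

section Tangent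

variable {n m k : ℕ}

def schmidtTangentMap (A : Fin k → Fin n → ℂ) (E : Fin k → Fin m → ℂ) :
    ((Fin k → Fin n → ℂ) × (Fin k → Fin m → ℂ)) →ₗ[ℂ] (Fin n × Fin m → ℂ) where
  toFun cd := ∑ j, prodVec (cd.1 j) (E j) + ∑ j, prodVec (A j) (cd.2 j)
  map_add' x y := by
    simp only [Prod.fst_add, Prod.snd_add, Pi.add_apply, prodVec_add_left, prodVec_add_right,
      Finset.sum_add_distrib]
    abel
  map_smul' s x := by
    simp only [Prod.smul_fst, Prod.smul_snd, Pi.smul_apply, prodVec_smul_left, prodVec_smul_right,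
      RingHom.id_apply, smul_add, Finset.smul_sum]

lemma sum_prodVec_add_smul (A c : Fin k → Fin n → ℂ) (E d : Fin k → Fin m → ℂ) (s : ℂ) :
    ∑ j, prodVec (A j + s • c j) (E j + s • d j) =
      ∑ j, prodVec (A j) (E j) +
        s • (schmidtTangentMap A E (c, d) + s • ∑ j, prodVec (c j) (d j)) := by
  simp only [schmidtTangentMap, LinearMap.coe_mk, AddHom.coe_mk, prodVec_add_left,
    prodVec_add_right, prodVec_smul_left, prodVec_smul_right, smul_add, smul_smul,
    Finset.sum_add_distrib, Finset.smul_sum]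
  abel

lemma finrank_ker_schmidtTangentMap_le {A : Fin k → Fin n → ℂ} {E : Fin k → Fin m → ℂ}
    (hA : LinearIndependent ℂ A) (hE : IpOrthonormal E) :
    Module.finrank ℂ (LinearMap.ker (schmidtTangentMap A E)) ≤ k * k := by
  let Ψ : (Fin k → Fin m → ℂ) →ₗ[ℂ] (Fin k → Fin k → ℂ) :=
    { toFun d l j := ip (E l) (d j)
      map_add' _ _ := by ext; simp [ip_add_right]
      map_smul' _ _ := by ext; simp [ip_smul_right_s17] }
  have hinj : Function.Injective
      (Ψ ∘ₗ LinearMap.snd ℂ _ _ ∘ₗ (LinearMap.ker (schmidtTangentMap A E)).subtype) := by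
    rw [← LinearMap.ker_eq_bot, LinearMap.ker_eq_bot']
    rintro ⟨⟨c, d⟩, hcd⟩ hΨ
    have hd₀ : ∀ l j, ip (E l) (d j) = 0 := fun l j => congrFun (congrFun hΨ l) j
    have hT : ∑ j, prodVec (c j) (E j) + ∑ j, prodVec (A j) (d j) = 0 := hcd
    have hc : c = 0 := funext fun l => by
      simpa [contractSnd_prodVec, hd₀, hE l] using congrArg (contractSnd (E l)) hT
    have hd : d = 0 := funext fun j => funext fun q => by
      have h := congrArg (contractSnd (Pi.single q 1)) hT
      simp [hc, contractSnd_prodVec, ← star_ip_s17 _ (Pi.single q 1), ip_single_right] at h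
      exact Fintype.linearIndependent_iff.1 hA (fun j => d j q) h j
    subst hc hd
    rfl
  calc Module.finrank ℂ (LinearMap.ker (schmidtTangentMap A E))
      ≤ Module.finrank ℂ (Fin k → Fin k → ℂ) := LinearMap.finrank_le_finrank_of_injective hinj
    _ = k * k := by rw [Module.finrank_pi_fintype]; simp

lemma add_le_finrank_range_schmidtTangentMap {A : Fin k → Fin n → ℂ} {E : Fin k → Fin m → ℂ}
    (hA : LinearIndependent ℂ A) (hE : IpOrthonormal E) :
    k * n + k * m ≤ Module.finrank ℂ (LinearMap.range (schmidtTangentMap A E)) + k * k := by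
  have h := LinearMap.finrank_range_add_finrank_ker (schmidtTangentMap A E)
  simp only [Module.finrank_prod, Module.finrank_pi_fintype] at h
  simp only [Finset.sum_const, Finset.card_univ, Fintype.card_fin, Module.finrank_self,
    smul_eq_mul, mul_one] at h
  linarith [finrank_ker_schmidtTangentMap_le hA hE]

lemma exists_ne_zero_mem_span_mem_range_schmidtTangentMap {κ : Type*} [Fintype κ] [DecidableEq κ]
    {v : κ → Fin n × Fin m → ℂ} (hv : IpOrthonormal v)
    (hcard : (n - k) * (m - k) < Fintype.card κ) {A : Fin k → Fin n → ℂ}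
    {E : Fin k → Fin m → ℂ} (hA : LinearIndependent ℂ A) (hE : IpOrthonormal E) :
    ∃ T ∈ Submodule.span ℂ (Set.range v), T ∈ LinearMap.range (schmidtTangentMap A E) ∧ T ≠ 0 := by
  have hkn : k ≤ n := by simpa using hA.fintype_card_le_finrank
  have hkm : k ≤ m := by simpa using hE.linearIndependent.fintype_card_le_finrank
  have hdim : (n - k) * (m - k) + (k * n + k * m) = n * m + k * k := by
    zify [hkn, hkm]; ring
  by_contra! h
  have hdisj := Submodule.finrank_add_finrank_le_of_disjoint
    (Submodule.disjoint_def.2 fun T hS hR => h T hS hR)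
  rw [finrank_span_eq_card hv.linearIndependent] at hdisj
  simp only [Module.finrank_fintype_fun_eq_card, Fintype.card_prod, Fintype.card_fin] at hdisj
  linarith [add_le_finrank_range_schmidtTangentMap hA hE]

end Tangent

section Optimality

variable {n m k : ℕ} {M : Matrix (Fin n × Fin m) (Fin n × Fin m) ℂ}

lemma hermForm_nonpos_of_nrm_eq_one (h : ∀ w, nrm w = 1 → SRle k w → hermForm M w ≤ 0)
    {u : Fin n × Fin m → ℂ} (hu : SRle k u) : hermForm M u ≤ 0 := by
  rcases eq_or_ne u 0 with rfl | hu₀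
  · simp [hermForm, ip_zero_left]
  have hpos := re_ip_self_pos hu₀
  set s : ℂ := (((Real.sqrt (ip u u).re)⁻¹ : ℝ) : ℂ)
  have hs : Complex.normSq s * (ip u u).re = 1 := by
    rw [Complex.normSq_ofReal, ← mul_inv, Real.mul_self_sqrt hpos.le, inv_mul_cancel₀ hpos.ne']
  have h₁ := h (s • u) (nrm_eq_one_iff.2 (by rw [re_ip_smul_self, hs])) (hu.smul s)
  rw [hermForm_smul] at h₁
  nlinarith [Complex.normSq_nonneg s]

lemma mulVec_eq_zero_of_hermForm_nonpos (hM : M.IsHermitian)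
    (hle : ∀ u, SRle (k + 1) u → hermForm M u ≤ 0) {x : Fin n × Fin m → ℂ} (hx : SRle k x)
    (hx₀ : hermForm M x = 0) : M *ᵥ x = 0 := by
  funext p
  have h := ip_mulVec_eq_zero_of_hermForm_add_smul_nonpos hM hx₀ (y := Pi.single p 1) fun s => by
    refine hle _ ?_
    rw [← prodVec_single p.1 p.2, ← prodVec_smul_left]
    exact hx.add (SRle_one_prodVec _ _)
  rwa [ip_mulVec_of_isHermitian hM, ip_single_right, star_eq_zero] at h

lemma hermForm_nonpos_of_mem_range_schmidtTangentMap (hM : M.IsHermitian)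
    (hle : ∀ u, SRle k u → hermForm M u ≤ 0) {A : Fin k → Fin n → ℂ} {E : Fin k → Fin m → ℂ}
    (hx₀ : hermForm M (∑ j, prodVec (A j) (E j)) = 0) {T : Fin n × Fin m → ℂ}
    (hT : T ∈ LinearMap.range (schmidtTangentMap A E)) : hermForm M T ≤ 0 := by
  obtain ⟨⟨c, d⟩, rfl⟩ := hT
  refine hermForm_nonpos_of_hermForm_curve_nonpos hM hx₀ (z := ∑ j, prodVec (c j) (d j)) fun s => ?_
  rw [← sum_prodVec_add_smul]
  exact hle _ ⟨_, _, rfl⟩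

end Optimality

section Subspace

variable {n m k : ℕ} {κ : Type*} [Fintype κ] [DecidableEq κ] {v : κ → Fin n × Fin m → ℂ}

lemma IpOrthonormal.exists_SRle_hermForm_projMatrix_sub_pos (hv : IpOrthonormal v)
    (hcard : (n - (k + 1)) * (m - (k + 1)) < Fintype.card κ) {μ : ℝ} (hμ₀ : 0 < μ) (hμ₁ : μ < 1)
    {w₀ : Fin n × Fin m → ℂ} (hw₀ : SRle (k + 1) w₀) (hw₀₀ : w₀ ≠ 0)
    (hmax : hermForm (projMatrix v - (μ : ℂ) • 1) w₀ = 0) :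
    ∃ u, SRle (k + 1) u ∧ 0 < hermForm (projMatrix v - (μ : ℂ) • 1) u := by
  have hM := (isHermitian_projMatrix v).sub_smul_one μ
  by_contra! hle
  rcases hw₀.pred_or_exists_linearIndependent with hw₀' | ⟨A, E, rfl, hA, hE⟩
  · have h := mulVec_eq_zero_of_hermForm_nonpos hM hle hw₀' hmax
    rw [Matrix.sub_mulVec, Matrix.smul_mulVec, Matrix.one_mulVec, sub_eq_zero] at h
    exact hμ₁.ne <| by
      exact_mod_cast hv.eq_one_of_projMatrix_mulVec_eq_smul hw₀₀ (by simpa using hμ₀.ne') h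
  · obtain ⟨T, hTS, hTR, hT₀⟩ := exists_ne_zero_mem_span_mem_range_schmidtTangentMap hv hcard hA hE
    have h := hermForm_nonpos_of_mem_range_schmidtTangentMap hM hle hmax hTR
    rw [hermForm_sub_smul_one, hermForm, hv.projMatrix_mulVec_of_mem_span hTS] at h
    nlinarith [re_ip_self_pos hT₀]


theorem IpOrthonormal.exists_nrm_eq_one_SRle_mem_span (hv : IpOrthonormal v)
    (hcard : (n - k) * (m - k) < Fintype.card κ) :
    ∃ w, nrm w = 1 ∧ SRle k w ∧ w ∈ Submodule.span ℂ (Set.range v) := by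
  have hle : Fintype.card κ ≤ n * m := by simpa using hv.linearIndependent.fintype_card_le_finrank
  obtain ⟨k, rfl⟩ : ∃ k', k = k' + 1 := Nat.exists_eq_succ_of_ne_zero fun hk => by
    simp only [hk, Nat.sub_zero] at hcard; omega
  obtain ⟨i₀⟩ : Nonempty κ := Fintype.card_pos_iff.1 (by omega)
  obtain ⟨p, hp⟩ := Function.ne_iff.1 (hv.ne_zero i₀)
  have hδ : nrm (Pi.single p 1) = 1 ∧ SRle (k + 1) (Pi.single p (1 : ℂ)) :=
    ⟨nrm_eq_one_iff.2 (by simp [ip_single_right]),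
      prodVec_single p.1 p.2 ▸ (SRle_one_prodVec _ _).mono (by omega)⟩
  obtain ⟨w₀, ⟨hw₀, hw₀S⟩, hmax⟩ := (isCompact_setOf_nrm_eq_one_SRle n m (k + 1)).exists_isMaxOn
    ⟨_, hδ⟩ (continuous_hermForm (projMatrix v)).continuousOn
  set μ := hermForm (projMatrix v) w₀
  by_cases hμ₁ : 1 ≤ μ
  · exact ⟨w₀, hw₀, hw₀S, hv.mem_span_of_re_ip_self_le_hermForm (nrm_eq_one_iff.1 hw₀ ▸ hμ₁)⟩
  have hμ₀ : 0 < μ := by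
    refine lt_of_lt_of_le ?_ (hmax hδ)
    rw [hermForm_projMatrix]
    refine Finset.sum_pos' (fun _ _ => Complex.normSq_nonneg _) ⟨i₀, Finset.mem_univ _, ?_⟩
    rwa [ip_single_right, Complex.normSq_pos, star_ne_zero]
  have hnonpos : ∀ u, SRle (k + 1) u → hermForm (projMatrix v - (μ : ℂ) • 1) u ≤ 0 :=
    fun u => hermForm_nonpos_of_nrm_eq_one fun w hw hwS => by
      rw [hermForm_sub_smul_one, nrm_eq_one_iff.1 hw]
      have h : hermForm (projMatrix v) w ≤ μ := hmax ⟨hw, hwS⟩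
      linarith
  obtain ⟨u, hu, hpos⟩ := hv.exists_SRle_hermForm_projMatrix_sub_pos hcard hμ₀ (not_le.1 hμ₁)
    hw₀S (ne_zero_of_nrm_eq_one hw₀) (by rw [hermForm_sub_smul_one, nrm_eq_one_iff.1 hw₀]; ring)
  exact absurd (hnonpos u hu) (not_le.2 hpos)

end Subspace

lemma IpOrthonormal.re_ip_mulVec_neg {ι κ : Type*} [Fintype ι] [Fintype κ] [DecidableEq κ]
    {v : κ → ι → ℂ} (hv : IpOrthonormal v) {X : Matrix ι ι ℂ} {μ : κ → ℝ}
    (heig : ∀ i, X *ᵥ v i = (μ i : ℂ) • v i) (hμ : ∀ i, μ i < 0) {w : ι → ℂ}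
    (hw : w ∈ Submodule.span ℂ (Set.range v)) (hw₀ : w ≠ 0) : (ip w (X *ᵥ w)).re < 0 := by
  obtain ⟨c, rfl⟩ := (Submodule.mem_span_range_iff_exists_fun ℂ).1 hw
  obtain ⟨i₀, hi₀⟩ : ∃ i, c i ≠ 0 := by
    by_contra! h
    simp [h] at hw₀
  have hXw : X *ᵥ ∑ i, c i • v i = ∑ i, (μ i * c i) • v i := by
    simp only [Matrix.mulVec_sum, Matrix.mulVec_smul, heig, smul_smul, mul_comm]
  have hterm : ∀ i, (star (c i) * (μ i * c i)).re = μ i * Complex.normSq (c i) := fun i => by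
    rw [mul_left_comm, Complex.star_def, ← Complex.normSq_eq_conj_mul_self, ← Complex.ofReal_mul,
      Complex.ofReal_re]
  rw [hXw, hv.ip_sum_smul_sum_smul, Complex.re_sum]
  simp only [hterm]
  exact Finset.sum_neg'
    (fun i _ => mul_nonpos_of_nonpos_of_nonneg (hμ i).le (Complex.normSq_nonneg _))
    ⟨i₀, Finset.mem_univ _, mul_neg_of_neg_of_pos (hμ i₀) (Complex.normSq_pos.2 hi₀)⟩

theorem stmt17_general {n m k : ℕ}
    (X : Matrix (Fin n × Fin m) (Fin n × Fin m) ℂ)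
    (μ : Fin n × Fin m → ℝ) (v : Fin n × Fin m → Fin n × Fin m → ℂ)
    (horth : ∀ i j, ip (v i) (v j) = if i = j then 1 else 0)
    (heig : ∀ i, X.mulVec (v i) = (μ i : ℂ) • v i)
    (hbp : BlockPos k X) :
    (Finset.univ.filter (fun i => μ i < 0)).card ≤ (n - k) * (m - k) := by
  by_contra! hcard
  have hneg : IpOrthonormal fun i : {i // μ i < 0} => v i := fun i j => by
    simpa [Subtype.ext_iff] using horth i j
  obtain ⟨w, hw, hwS, hwspan⟩ :=
    hneg.exists_nrm_eq_one_SRle_mem_span (by rwa [Fintype.card_subtype])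
  exact (hbp w hw hwS).not_gt <|
    hneg.re_ip_mulVec_neg (fun i => heig i) (fun i => i.2) hwspan (ne_zero_of_nrm_eq_one hw)

/-- a k-block positive Hermitian operator has at most `(n-k)(m-k)`
negative eigenvalues (with multiplicity). -/
theorem stmt17 {n m k : ℕ} (hmn : m ≤ n) (hkm : k ≤ m)
    (X : Matrix (Fin n × Fin m) (Fin n × Fin m) ℂ) (hX : X.IsHermitian)
    (μ : Fin n × Fin m → ℝ) (v : Fin n × Fin m → Fin n × Fin m → ℂ)
    (horth : ∀ i j, ip (v i) (v j) = if i = j then 1 else 0)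
    (heig : ∀ i, X.mulVec (v i) = (μ i : ℂ) • v i)
    (hbp : BlockPos k X) :
    (Finset.univ.filter (fun i => μ i < 0)).card ≤ (n - k) * (m - k) :=
  stmt17_general X μ v horth heig hbp
end
end
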